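/- arXiv:2407.18817 — 5 statements merged into one kernel-verified Lean document; each statement's English description precedes it below -/
import Mathlib

section
/- Let Σ be a root system with basis Δ in a Euclidean space, Θ ⊆ Δ, and let p denote the orthogonal projection onto the orthogonal complement of the span of Θ. Then every element of p(Σ) is, in a unique way, a linear combination with integer coefficients all of the same sign of the elements of p(Δ ∖ Θ). -/
/-!
The projection `p` onto `(span Θ)ᗮ` is linear with kernel `span Θ`. Projecting the expansion
`α = ∑_{δ ∈ Δ} c δ • δ` of a root kills the terms with `δ ∈ Θ` and leaves
`p α = ∑_{δ ∈ Δ \ Θ} c δ • p δ`, with the same (sign-coherent) integer coefficients. Uniqueness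
holds because `span (Δ \ Θ)` meets `ker p = span Θ` only in `0`, by linear independence of `Δ`,
so `p` maps `Δ \ Θ` to a linearly independent family.
-/

open scoped RealInnerProductSpace
open Submodule

section LinearAlgebra

variable {R M N : Type*} [Ring R] [AddCommGroup M] [Module R M] [AddCommGroup N] [Module R N]

theorem LinearIndepOn.map_diff_of_ker_eq_span {s t : Set M} (hs : LinearIndepOn R id s)
    (hts : t ⊆ s) {f : M →ₗ[R] N} (hker : LinearMap.ker f = span R t) :
    LinearIndepOn R f (s \ t) := by
  have hdisj : Disjoint (span R (s \ t)) (span R t) :=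
    ((linearIndepOn_id_union_iff Set.disjoint_sdiff_left).1
      (by rwa [Set.sdiff_union_of_subset hts])).2.2
  exact (hs.mono Set.sdiff_subset).map (v := ((↑) : ↥(s \ t) → M)) <| by
    rwa [hker, Subtype.range_coe]

theorem LinearIndependent.eq_of_sum_intCast_smul_eq [CharZero R] {ι : Type*} [Fintype ι]
    {v : ι → M} (hv : LinearIndependent R v) {c d : ι → ℤ}
    (h : ∑ i, (c i : R) • v i = ∑ i, (d i : R) • v i) : c = d :=
  funext fun i => Int.cast_injective (Fintype.linearIndependent_iffₛ.1 hv _ _ h i)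

theorem LinearMap.map_sum_smul_eq_sum_sdiff [DecidableEq M] {Δ Θ : Finset M}
    (f : M →ₗ[R] N) (hf : ∀ x ∈ Θ, f x = 0) (c : Δ → R) :
    f (∑ i : Δ, c i • (i : M)) =
      ∑ i : (Δ \ Θ : Finset M), c ⟨i, (Finset.mem_sdiff.1 i.2).1⟩ • f i := by
  simp only [map_sum, map_smul]
  refine (Fintype.sum_of_injective
    (fun i : (Δ \ Θ : Finset M) => (⟨i, (Finset.mem_sdiff.1 i.2).1⟩ : Δ)) ?_ _ _ ?_
    fun _ => rfl).symm
  · intro i j hij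
    exact Subtype.ext (congrArg Subtype.val hij :)
  · intro i hi
    have hiΘ : (i : M) ∈ Θ := by
      by_contra h
      exact hi ⟨⟨i, Finset.mem_sdiff.2 ⟨i.2, h⟩⟩, rfl⟩
    rw [hf _ hiΘ, smul_zero]

end LinearAlgebra

theorem Submodule.ker_starProjection_orthogonal {𝕜 E : Type*} [RCLike 𝕜] [NormedAddCommGroup E]
    [InnerProductSpace 𝕜 E] (K : Submodule 𝕜 E) [K.HasOrthogonalProjection] :
    LinearMap.ker (Kᗮ.starProjection : E →ₗ[𝕜] E) = K :=
  Kᗮ.ker_starProjection.trans K.orthogonal_orthogonal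

theorem stmt2_general {V : Type*} [DecidableEq V] [NormedAddCommGroup V] [InnerProductSpace ℝ V]
    (S : Set V)
    (Δ Θ : Finset V) (hΘΔ : Θ ⊆ Δ)
    (hind : LinearIndependent ℝ (fun x : Δ => (x : V)))
    (hbase : ∀ α ∈ S, ∃ c : Δ → ℤ, ((∀ i, 0 ≤ c i) ∨ (∀ i, c i ≤ 0)) ∧
      α = ∑ i : Δ, (c i : ℝ) • (i : V))
    (p : V → V)
    (hp : ∀ v, p v = (Submodule.orthogonalProjectionOnto ((Submodule.span ℝ (Θ : Set V))ᗮ) v : V)) :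
    ∀ v ∈ p '' S, ∃! c : (Δ \ Θ : Finset V) → ℤ,
      ((∀ i, 0 ≤ c i) ∨ (∀ i, c i ≤ 0)) ∧
      v = ∑ i : (Δ \ Θ : Finset V), (c i : ℝ) • p (i : V) := by
  set K := span ℝ (Θ : Set V)
  obtain rfl : p = Kᗮ.starProjection := funext hp
  have hker := K.ker_starProjection_orthogonal
  have hli : LinearIndependent ℝ (fun i : (Δ \ Θ : Finset V) => Kᗮ.starProjection (i : V)) := by
    have := LinearIndepOn.map_diff_of_ker_eq_span hind hΘΔ hker
    rwa [← Finset.coe_sdiff] at this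
  rintro _ ⟨α, hα, rfl⟩
  obtain ⟨c, hsign, rfl⟩ := hbase α hα
  have hproj := LinearMap.map_sum_smul_eq_sum_sdiff (Kᗮ.starProjection : V →ₗ[ℝ] V)
    (fun x hx => by rw [← LinearMap.mem_ker, hker]; exact subset_span hx) (fun i => (c i : ℝ))
  refine ⟨fun i => c ⟨i, (Finset.mem_sdiff.1 i.2).1⟩,
    ⟨hsign.imp (fun h _ => h _) (fun h _ => h _), hproj⟩, fun d ⟨_, hd⟩ => ?_⟩
  exact hli.eq_of_sum_intCast_smul_eq (hd.symm.trans hproj)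

/-- Every element of the projection of Σ orthogonally to Θ is, in a unique way, a
linear combination with integer coefficients all of the same sign of the projections of
the simple roots outside Θ. -/
theorem stmt2 {V : Type*} [DecidableEq V] [NormedAddCommGroup V] [InnerProductSpace ℝ V]
    [FiniteDimensional ℝ V]
    (S : Set V) (hfin : S.Finite) (h0 : (0 : V) ∉ S)
    (hrefl : ∀ α ∈ S, ∀ β ∈ S, β - (2 * ⟪β, α⟫ / ⟪α, α⟫) • α ∈ S)
    (Δ Θ : Finset V) (hΘΔ : Θ ⊆ Δ) (hΔS : (Δ : Set V) ⊆ S)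
    (hind : LinearIndependent ℝ (fun x : Δ => (x : V)))
    (hbase : ∀ α ∈ S, ∃ c : Δ → ℤ, ((∀ i, 0 ≤ c i) ∨ (∀ i, c i ≤ 0)) ∧
      α = ∑ i : Δ, (c i : ℝ) • (i : V))
    (p : V → V)
    (hp : ∀ v, p v = (Submodule.orthogonalProjectionOnto ((Submodule.span ℝ (Θ : Set V))ᗮ) v : V)) :
    ∀ v ∈ p '' S, ∃! c : (Δ \ Θ : Finset V) → ℤ,
      ((∀ i, 0 ≤ c i) ∨ (∀ i, c i ≤ 0)) ∧
      v = ∑ i : (Δ \ Θ : Finset V), (c i : ℝ) • p (i : V) :=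
  stmt2_general S Δ Θ hΘΔ hind hbase p hp
end

section
/- Let u = (e_r + ⋯ + e_{r+m})/(m+1), v = (e_s + ⋯ + e_{s+p})/(p+1), w = (e_t + ⋯ + e_{t+q})/(q+1) be averages over three pairwise disjoint blocks of consecutive standard basis vectors of ℝ^N, and set ᾱ = u − v and β̄ = v − w. If ᾱ and β̄ together with their negatives and ±(u − w) satisfy the crystallographic condition (i.e. 2⟨ᾱ,β̄⟩/⟨β̄,β̄⟩ and 2⟨ᾱ,β̄⟩/⟨ᾱ,ᾱ⟩ are integers with product in {1,2,3}), then m = p = q. -/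
/-!
Since the three blocks are disjoint and orthonormal, `u`, `v`, `w` are pairwise orthogonal with
`⟪u, u⟫ = 1/(m+1)`, `⟪v, v⟫ = 1/(p+1)`, `⟪w, w⟫ = 1/(q+1)`. Hence the two Cartan integers are
`-2⟪v, v⟫/(⟪v, v⟫ + ⟪w, w⟫)` and `-2⟪v, v⟫/(⟪u, u⟫ + ⟪v, v⟫)`, both strictly between `-2` and `0`.
So both equal `-1`, which forces `⟪u, u⟫ = ⟪v, v⟫ = ⟪w, w⟫`.
-/

open scoped RealInnerProductSpace
open Finset

section BlockAverage

variable {ι V : Type*} [DecidableEq ι] [NormedAddCommGroup V] [InnerProductSpace ℝ V]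
  (e : ι → V)

lemma inner_sum_sum_eq_card_inter {X Y : Finset ι}
    (h : ∀ i ∈ X, ∀ j ∈ Y, ⟪e i, e j⟫ = if i = j then 1 else 0) :
    ⟪∑ i ∈ X, e i, ∑ j ∈ Y, e j⟫ = #(X ∩ Y) := by
  have row : ∀ i ∈ X, ⟪e i, ∑ j ∈ Y, e j⟫ = if i ∈ Y then 1 else 0 := fun i hi => by
    rw [inner_sum, sum_congr rfl (h i hi), sum_ite_eq]
  rw [sum_inner, sum_congr rfl row, sum_ite_mem, sum_const, nsmul_one]

noncomputable def blockAverage (X : Finset ι) : V := (#X : ℝ)⁻¹ • ∑ i ∈ X, e i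

lemma inner_blockAverage {X Y : Finset ι}
    (h : ∀ i ∈ X, ∀ j ∈ Y, ⟪e i, e j⟫ = if i = j then 1 else 0) :
    ⟪blockAverage e X, blockAverage e Y⟫ = #(X ∩ Y) / (#X * #Y) := by
  rw [blockAverage, blockAverage, real_inner_smul_left, real_inner_smul_right,
    inner_sum_sum_eq_card_inter e h]
  field_simp

lemma inner_blockAverage_of_disjoint {X Y : Finset ι} (hXY : Disjoint X Y)
    (h : ∀ i ∈ X, ∀ j ∈ Y, ⟪e i, e j⟫ = if i = j then 1 else 0) :
    ⟪blockAverage e X, blockAverage e Y⟫ = 0 := by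
  rw [inner_blockAverage e h, disjoint_iff_inter_eq_empty.mp hXY, card_empty, Nat.cast_zero,
    zero_div]

lemma inner_blockAverage_self {X : Finset ι} (hX : X.Nonempty)
    (h : ∀ i ∈ X, ∀ j ∈ X, ⟪e i, e j⟫ = if i = j then 1 else 0) :
    ⟪blockAverage e X, blockAverage e X⟫ = (#X : ℝ)⁻¹ := by
  have : (#X : ℝ) ≠ 0 := by exact_mod_cast hX.card_ne_zero
  rw [inner_blockAverage e h, inter_self]
  field_simp

end BlockAverage

lemma Nat.card_Icc_add (r m : ℕ) : #(Icc r (r + m)) = m + 1 := by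
  rw [Nat.card_Icc]
  omega

lemma blockAverage_Icc {V : Type*} [NormedAddCommGroup V] [InnerProductSpace ℝ V]
    (e : ℕ → V) (r m : ℕ) :
    blockAverage e (Icc r (r + m)) = ((m : ℝ) + 1)⁻¹ • ∑ i ∈ Icc r (r + m), e i := by
  rw [blockAverage, Nat.card_Icc_add, Nat.cast_succ]

section Orthogonal

variable {V : Type*} [NormedAddCommGroup V] [InnerProductSpace ℝ V] {u v w : V}

lemma inner_sub_self_of_inner_eq_zero (huv : ⟪u, v⟫ = 0) :
    ⟪u - v, u - v⟫ = ⟪u, u⟫ + ⟪v, v⟫ := by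
  rw [inner_sub_sub_self, real_inner_comm u v, huv]
  ring

lemma inner_sub_sub_of_inner_eq_zero (huv : ⟪u, v⟫ = 0) (huw : ⟪u, w⟫ = 0)
    (hvw : ⟪v, w⟫ = 0) : ⟪u - v, v - w⟫ = -⟪v, v⟫ := by
  simp only [inner_sub_left, inner_sub_right, huv, huw, hvw]
  ring

end Orthogonal

lemma eq_of_two_mul_neg_div_add_eq_intCast {y z : ℝ} (hy : 0 < y) (hz : 0 < z) {a : ℤ}
    (ha : 2 * -y / (y + z) = a) : y = z := by
  have hyz : 0 < y + z := by positivity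
  have ha_neg : (a : ℝ) < 0 := by rw [← ha]; exact div_neg_of_neg_of_pos (by linarith) hyz
  have ha_gt : (-2 : ℝ) < a := by rw [← ha, lt_div_iff₀ hyz]; linarith
  have ha_eq : a = -1 := by
    have : a < 0 := by exact_mod_cast ha_neg
    have : -2 < a := by exact_mod_cast ha_gt
    omega
  rw [ha_eq, Int.cast_neg, Int.cast_one, div_eq_iff hyz.ne'] at ha
  linarith

/-- If ᾱ = u − v and β̄ = v − w (u, v, w averages over three pairwise disjoint blocks of
orthonormal vectors of sizes m+1, p+1, q+1) satisfy the crystallographic condition, then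
m = p = q. -/
theorem stmt5 {V : Type*} [NormedAddCommGroup V] [InnerProductSpace ℝ V]
    (r m s p t q : ℕ) (e : ℕ → V)
    (hd1 : Disjoint (Finset.Icc r (r + m)) (Finset.Icc s (s + p)))
    (hd2 : Disjoint (Finset.Icc s (s + p)) (Finset.Icc t (t + q)))
    (hd3 : Disjoint (Finset.Icc r (r + m)) (Finset.Icc t (t + q)))
    (horth : ∀ i ∈ Finset.Icc r (r + m) ∪ Finset.Icc s (s + p) ∪ Finset.Icc t (t + q),
      ∀ j ∈ Finset.Icc r (r + m) ∪ Finset.Icc s (s + p) ∪ Finset.Icc t (t + q),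
      ⟪e i, e j⟫ = if i = j then 1 else 0)
    (u v w : V)
    (hu : u = ((m : ℝ) + 1)⁻¹ • ∑ i ∈ Finset.Icc r (r + m), e i)
    (hv : v = ((p : ℝ) + 1)⁻¹ • ∑ i ∈ Finset.Icc s (s + p), e i)
    (hw : w = ((q : ℝ) + 1)⁻¹ • ∑ i ∈ Finset.Icc t (t + q), e i)
    (hcart : ∃ a b : ℤ, 2 * ⟪u - v, v - w⟫ / ⟪v - w, v - w⟫ = (a : ℝ) ∧
      2 * ⟪u - v, v - w⟫ / ⟪u - v, u - v⟫ = (b : ℝ) ∧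
      (a * b = 1 ∨ a * b = 2 ∨ a * b = 3)) :
    m = p ∧ p = q := by
  set A := Icc r (r + m)
  set B := Icc s (s + p)
  set C := Icc t (t + q)
  have orth : ∀ {X Y}, X ⊆ A ∪ B ∪ C → Y ⊆ A ∪ B ∪ C →
      ∀ i ∈ X, ∀ j ∈ Y, ⟪e i, e j⟫ = if i = j then 1 else 0 :=
    fun hX hY i hi j hj => horth i (hX hi) j (hY hj)
  have hA : A ⊆ A ∪ B ∪ C := subset_union_left.trans subset_union_left
  have hB : B ⊆ A ∪ B ∪ C := subset_union_right.trans subset_union_left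
  have hC : C ⊆ A ∪ B ∪ C := subset_union_right
  rw [← blockAverage_Icc] at hu hv hw
  subst hu hv hw
  have huv := inner_blockAverage_of_disjoint e hd1 (orth hA hB)
  have huw := inner_blockAverage_of_disjoint e hd3 (orth hA hC)
  have hvw := inner_blockAverage_of_disjoint e hd2 (orth hB hC)
  have huu := inner_blockAverage_self e (nonempty_Icc.2 (by omega)) (orth hA hA)
  have hvv := inner_blockAverage_self e (nonempty_Icc.2 (by omega)) (orth hB hB)
  have hww := inner_blockAverage_self e (nonempty_Icc.2 (by omega)) (orth hC hC)
  obtain ⟨a, b, ha, hb, -⟩ := hcart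
  rw [Nat.card_Icc_add] at huu hvv hww
  rw [inner_sub_sub_of_inner_eq_zero huv huw hvw, inner_sub_self_of_inner_eq_zero hvw,
    hvv, hww] at ha
  rw [inner_sub_sub_of_inner_eq_zero huv huw hvw, inner_sub_self_of_inner_eq_zero huv,
    add_comm, huu, hvv] at hb
  have hpq := eq_of_two_mul_neg_div_add_eq_intCast (by positivity) (by positivity) ha
  have hpm := eq_of_two_mul_neg_div_add_eq_intCast (by positivity) (by positivity) hb
  simp only [inv_inj, Nat.cast_inj, Nat.add_right_cancel_iff] at hpq hpm
  exact ⟨hpm.symm, hpq⟩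
end

section
/- In the C_n setting with blocks of sizes m+1 and p+1 with m + 1 = 3(p + 1), the vectors ᾱ = u − v and β̄ = 2v form a G_2 simple-root configuration (length ratio squared 3, angle 150°), but the vector 3u − v (which would be the root β̄ + 3ᾱ of G_2) is not of the form p(γ) for any root γ = ±2e_i or ±e_i ± e_j of C_n, where p is the projection orthogonal to the two blocks' simple roots. Hence no root system of type G_2 arises this way. -/
open scoped RealInnerProductSpace

/-!
The block averages `u` and `v` are orthogonal with `‖u‖² = 1/(m+1)` and `‖v‖² = 1/(p+1)`, so
`m + 1 = 3(p + 1)` gives `‖v‖² = 3‖u‖²`, and the G₂ configuration of `u - v` and `2v` is plane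
geometry. For the second part, test against `u`: every `p(eᵢ)` is `u`, `v` or some `eᵢ` outside
the first block, so `⟪p(eᵢ), u⟫ ∈ {0, ‖u‖²}` and every projected root `x` has
`|⟪x, u⟫| ≤ 2‖u‖²`, whereas `⟪3u - v, u⟫ = 3‖u‖²`.
-/

theorem Nat.card_Icc_self_add (r m : ℕ) : (Finset.Icc r (r + m)).card = m + 1 := by
  rw [Nat.card_Icc]; omega

section BlockAverage

variable {ι V : Type*} [NormedAddCommGroup V] [InnerProductSpace ℝ V]

noncomputable def blockAvg (e : ι → V) (A : Finset ι) : V :=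
  (A.card : ℝ)⁻¹ • ∑ i ∈ A, e i

variable [DecidableEq ι] {e : ι → V} {S : Set ι} {A B : Finset ι}

theorem inner_blockAvg_right (he : ∀ i ∈ S, ∀ j ∈ S, ⟪e i, e j⟫ = if i = j then 1 else 0)
    (hA : ↑A ⊆ S) {j : ι} (hj : j ∈ S) :
    ⟪e j, blockAvg e A⟫ = if j ∈ A then (A.card : ℝ)⁻¹ else 0 := by
  rw [blockAvg, real_inner_smul_right, inner_sum,
    Finset.sum_congr rfl fun i hi => he j hj i (hA hi), Finset.sum_ite_eq]
  split_ifs <;> simp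

theorem inner_blockAvg_self (he : ∀ i ∈ S, ∀ j ∈ S, ⟪e i, e j⟫ = if i = j then 1 else 0)
    (hA : ↑A ⊆ S) : ⟪blockAvg e A, blockAvg e A⟫ = (A.card : ℝ)⁻¹ := by
  nth_rewrite 1 [blockAvg]
  rw [real_inner_smul_left, sum_inner, Finset.sum_congr rfl fun i hi =>
    (inner_blockAvg_right he hA (hA hi)).trans (if_pos hi), Finset.sum_const, nsmul_eq_mul]
  rcases eq_or_ne (A.card : ℝ) 0 with h | h
  · simp [h]
  · field_simp

theorem inner_blockAvg_of_disjoint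
    (he : ∀ i ∈ S, ∀ j ∈ S, ⟪e i, e j⟫ = if i = j then 1 else 0)
    (hA : ↑A ⊆ S) (hB : ↑B ⊆ S) (hAB : Disjoint A B) :
    ⟪blockAvg e A, blockAvg e B⟫ = 0 := by
  rw [blockAvg, real_inner_smul_left, sum_inner, Finset.sum_eq_zero, mul_zero]
  intro i hi
  rw [inner_blockAvg_right he hB (hA hi), if_neg (Finset.disjoint_left.mp hAB hi)]

end BlockAverage

section G2

variable {V : Type*} [NormedAddCommGroup V] [InnerProductSpace ℝ V]

/-- Simple roots of G₂: `α` short, `β` long, at angle 150°. -/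
def IsG2SimplePair (α β : V) : Prop :=
  ‖β‖ ^ 2 = 3 * ‖α‖ ^ 2 ∧ ⟪α, β⟫ / (‖α‖ * ‖β‖) = -(Real.sqrt 3) / 2

theorem isG2SimplePair_sub_two_smul {u v : V} (hu : u ≠ 0) (huv : ⟪u, v⟫ = 0)
    (hv : ‖v‖ ^ 2 = 3 * ‖u‖ ^ 2) : IsG2SimplePair (u - v) ((2 : ℝ) • v) := by
  have hsub_sq : ‖u - v‖ ^ 2 = (2 * ‖u‖) ^ 2 := by rw [norm_sub_sq_real, huv, hv]; ring
  have hsub : ‖u - v‖ = 2 * ‖u‖ :=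
    (pow_left_inj₀ (norm_nonneg _) (by positivity) two_ne_zero).mp hsub_sq
  have hv' : ‖v‖ = Real.sqrt 3 * ‖u‖ := by
    rw [← Real.sqrt_sq (norm_nonneg v), hv, Real.sqrt_mul (by norm_num),
      Real.sqrt_sq (norm_nonneg u)]
  have hsmul : ‖(2 : ℝ) • v‖ = 2 * ‖v‖ := by rw [norm_smul, Real.norm_two]
  have hinner : ⟪u - v, (2 : ℝ) • v⟫ = -2 * ‖v‖ ^ 2 := by
    rw [real_inner_smul_right, inner_sub_left, huv, real_inner_self_eq_norm_sq]; ring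
  have hu' : 0 < ‖u‖ := norm_pos_iff.mpr hu
  constructor
  · rw [hsmul, hsub_sq, mul_pow, hv]; ring
  · rw [hinner, hsub, hsmul, hv', div_eq_iff (by positivity)]
    ring

end G2

section ProjectedRoots

variable {V : Type*} [NormedAddCommGroup V] [InnerProductSpace ℝ V]

/-- The vectors `±f i ± f j` (`i ≠ j`) and `±2 f i`, for indices below `n`: with `f i = p(eᵢ)`
these are the projections of the roots of `Cₙ`. -/
def projRootSet (n : ℕ) (f : ℕ → V) : Set V :=
  {x | (∃ i j, i < n ∧ j < n ∧ i ≠ j ∧ (x = f i + f j ∨ x = f i - f j ∨ x = -f i - f j)) ∨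
    (∃ i, i < n ∧ (x = (2 : ℝ) • f i ∨ x = -((2 : ℝ) • f i)))}

theorem abs_inner_le_of_mem_projRootSet {n : ℕ} {f : ℕ → V} {w x : V} {c : ℝ}
    (hf : ∀ i < n, |⟪f i, w⟫| ≤ c) (hx : x ∈ projRootSet n f) : |⟪x, w⟫| ≤ 2 * c := by
  have hb : ∀ i < n, -c ≤ ⟪f i, w⟫ ∧ ⟪f i, w⟫ ≤ c := fun i hi => abs_le.mp (hf i hi)
  rw [abs_le]
  rcases hx with ⟨i, j, hi, hj, -, rfl | rfl | rfl⟩ | ⟨i, hi, rfl | rfl⟩ <;>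
    simp only [inner_add_left, inner_sub_left, inner_neg_left, real_inner_smul_left]
  all_goals first
    | constructor <;> linarith [hb i hi, hb j hj]
    | constructor <;> linarith [hb i hi]

theorem three_smul_sub_not_mem_projRootSet {n : ℕ} {f : ℕ → V} {u v : V}
    (hu : u ≠ 0) (hvu : ⟪v, u⟫ = 0) (hf : ∀ i < n, |⟪f i, u⟫| ≤ ‖u‖ ^ 2) :
    (3 : ℝ) • u - v ∉ projRootSet n f := by
  intro hx
  have hbound := abs_inner_le_of_mem_projRootSet hf hx
  rw [inner_sub_left, real_inner_smul_left, real_inner_self_eq_norm_sq, hvu, sub_zero,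
    abs_of_nonneg (by positivity)] at hbound
  have : 0 < ‖u‖ := norm_pos_iff.mpr hu
  nlinarith

end ProjectedRoots

/-- In the C_n setting with blocks of sizes m+1 = 3(p+1) and p+1, the vectors ᾱ = u − v
and β̄ = 2v form a G₂ simple-root configuration (squared length ratio 3, angle 150°), but
the vector 3u − v (which would be the G₂ root β̄ + 3ᾱ) is not the projection of any root
±2e_i or ±e_i ± e_j of C_n; hence no root system of type G₂ arises this way. -/
theorem stmt9 {V : Type*} [NormedAddCommGroup V] [InnerProductSpace ℝ V]
    (n r m s p : ℕ) (hm : m + 1 = 3 * (p + 1))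
    (hrn : r + m < n) (hsn : s + p < n) (e : ℕ → V)
    (hd : Disjoint (Finset.Icc r (r + m)) (Finset.Icc s (s + p)))
    (horth : ∀ i, i < n → ∀ j, j < n → ⟪e i, e j⟫ = if i = j then 1 else 0)
    (u v : V)
    (hu : u = ((m : ℝ) + 1)⁻¹ • ∑ i ∈ Finset.Icc r (r + m), e i)
    (hv : v = ((p : ℝ) + 1)⁻¹ • ∑ i ∈ Finset.Icc s (s + p), e i)
    (α' β' : V) (hα' : α' = u - v) (hβ' : β' = (2 : ℝ) • v)
    (f : ℕ → V)
    (hf : ∀ i, f i = if i ∈ Finset.Icc r (r + m) then u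
      else if i ∈ Finset.Icc s (s + p) then v else e i)
    (P : Set V)
    (hP : P = {x | (∃ i j, i < n ∧ j < n ∧ i ≠ j ∧
        (x = f i + f j ∨ x = f i - f j ∨ x = -f i - f j)) ∨
      (∃ i, i < n ∧ (x = (2 : ℝ) • f i ∨ x = -((2 : ℝ) • f i)))}) :
    ‖β'‖ ^ 2 = 3 * ‖α'‖ ^ 2 ∧
    ⟪α', β'⟫ / (‖α'‖ * ‖β'‖) = -(Real.sqrt 3) / 2 ∧
    (3 : ℝ) • u - v ∉ P := by
  set A := Finset.Icc r (r + m)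
  set B := Finset.Icc s (s + p)
  have he : ∀ i ∈ Set.Iio n, ∀ j ∈ Set.Iio n, ⟪e i, e j⟫ = if i = j then 1 else 0 := horth
  have hA : ↑A ⊆ Set.Iio n := fun i hi => (Finset.mem_Icc.mp hi).2.trans_lt hrn
  have hB : ↑B ⊆ Set.Iio n := fun i hi => (Finset.mem_Icc.mp hi).2.trans_lt hsn
  replace hu : u = blockAvg e A := by rw [hu, blockAvg, Nat.card_Icc_self_add]; push_cast; rfl
  replace hv : v = blockAvg e B := by rw [hv, blockAvg, Nat.card_Icc_self_add]; push_cast; rfl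
  have huu : ‖u‖ ^ 2 = ((m : ℝ) + 1)⁻¹ := by
    rw [← real_inner_self_eq_norm_sq, hu, inner_blockAvg_self he hA, Nat.card_Icc_self_add]
    push_cast; rfl
  have hvv : ‖v‖ ^ 2 = 3 * ‖u‖ ^ 2 := by
    have hm' : ((m : ℝ) + 1) = 3 * ((p : ℝ) + 1) := by exact_mod_cast hm
    rw [huu, hm', ← real_inner_self_eq_norm_sq, hv, inner_blockAvg_self he hB,
      Nat.card_Icc_self_add]
    push_cast; field_simp
  have huv : ⟪u, v⟫ = 0 := by rw [hu, hv]; exact inner_blockAvg_of_disjoint he hA hB hd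
  have hu0 : u ≠ 0 := fun h => by simp [h] at huu; linarith
  obtain ⟨hlen, hangle⟩ : IsG2SimplePair α' β' :=
    hα' ▸ hβ' ▸ isG2SimplePair_sub_two_smul hu0 huv hvv
  refine ⟨hlen, hangle,
    hP ▸ three_smul_sub_not_mem_projRootSet hu0 (real_inner_comm u v ▸ huv) ?_⟩
  intro i hi
  rw [hf i]
  split_ifs with hiA hiB
  · rw [real_inner_self_eq_norm_sq, abs_of_nonneg (by positivity)]
  · rw [real_inner_comm, huv, abs_zero]; positivity
  · rw [hu, inner_blockAvg_right he hA hi, if_neg hiA, abs_zero]; positivity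
end

section
/- Let Σ be the root system D_n in ℝ^n (roots ±e_i ± e_j, i < j, n ≥ 4) and suppose neither e_{n−1} − e_n nor e_{n−1} + e_n lies in Θ ⊆ Δ, where Θ is a union of chains of simple roots α_i = e_i − e_{i+1}. If the projected vectors ᾱ = p(e_{n-1}) ± e_n and β̄ = p(e_s) − p(e_{n−1}) (with p(e_s), p(e_{n-1}) block averages over blocks of sizes m+1, p+1 and p(e_n) = e_n) satisfy the crystallographic conditions C·R = 4 with C/R = (1 + (p+1)/(m+1))², then m = p = 0. -/
open scoped RealInnerProductSpace

lemma sum_orth {V : Type*} [NormedAddCommGroup V] [InnerProductSpace ℝ V]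
    (e : ℕ → V) (S T : Finset ℕ)
    (h : ∀ i ∈ S, ∀ j ∈ T, ⟪e i, e j⟫ = if i = j then 1 else 0) :
    ⟪∑ i ∈ S, e i, ∑ j ∈ T, e j⟫ = ((S ∩ T).card : ℝ) := by
  rw [sum_inner]
  have : ∀ i ∈ S, ⟪e i, ∑ j ∈ T, e j⟫ = if i ∈ T then (1:ℝ) else 0 := by
    intro i hi
    rw [inner_sum, Finset.sum_congr rfl (h i hi), Finset.sum_ite_eq]
  rw [Finset.sum_congr rfl this, Finset.sum_ite_mem]
  simp

set_option maxHeartbeats 1600000 in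
/-- In the D_n setting: with ᾱ = p(e_{n-1}) ± e_n and β̄ = p(e_s) − p(e_{n-1}), where
p(e_s) and p(e_{n-1}) are block averages over blocks of sizes m+1 and p+1 and
p(e_n) = e_n, if C·R = 4 and C/R = (1 + (p+1)/(m+1))² with C/R ∈ {4, 1, 4/9}, then
m = p = 0. -/
theorem stmt10 {V : Type*} [NormedAddCommGroup V] [InnerProductSpace ℝ V]
    (r m s p t : ℕ) (e : ℕ → V)
    (hd1 : Disjoint (Finset.Icc r (r + m)) (Finset.Icc s (s + p)))
    (ht1 : t ∉ Finset.Icc r (r + m)) (ht2 : t ∉ Finset.Icc s (s + p))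
    (horth : ∀ i ∈ Finset.Icc r (r + m) ∪ Finset.Icc s (s + p) ∪ {t},
      ∀ j ∈ Finset.Icc r (r + m) ∪ Finset.Icc s (s + p) ∪ {t},
      ⟪e i, e j⟫ = if i = j then 1 else 0)
    (a b c : V)
    (ha : a = ((m : ℝ) + 1)⁻¹ • ∑ i ∈ Finset.Icc r (r + m), e i)
    (hb : b = ((p : ℝ) + 1)⁻¹ • ∑ i ∈ Finset.Icc s (s + p), e i)
    (hc : c = e t)
    (ε : ℝ) (hε : ε = 1 ∨ ε = -1)
    (α' β' : V) (hα' : α' = b + ε • c) (hβ' : β' = a - b)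
    (C R : ℝ)
    (hC : C = ‖α'‖ ^ 2 * ‖β'‖ ^ 2 / ⟪α', β'⟫ ^ 2)
    (hR : R = ‖α'‖ ^ 2 / ‖β'‖ ^ 2)
    (hCR : C * R = 4)
    (hquot : C / R = (1 + ((p : ℝ) + 1) / ((m : ℝ) + 1)) ^ 2)
    (hcrys : C / R ∈ ({4, 1, 4 / 9} : Set ℝ)) :
    m = 0 ∧ p = 0 := by
  set S := Finset.Icc r (r + m) with hS
  set T := Finset.Icc s (s + p) with hT
  set q : ℝ := (m : ℝ) + 1 with hq
  set w : ℝ := (p : ℝ) + 1 with hw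
  clear_value q w
  have hq0 : 0 < q := by rw [hq]; positivity
  have hw0 : 0 < w := by rw [hw]; positivity
  have hmemS : ∀ i ∈ S, i ∈ S ∪ T ∪ {t} := fun i hi => by simp [hi]
  have hmemT : ∀ i ∈ T, i ∈ S ∪ T ∪ {t} := fun i hi => by simp [hi]
  have hmemt : t ∈ S ∪ T ∪ {t} := by simp
  have hST : ⟪∑ i ∈ S, e i, ∑ j ∈ T, e j⟫ = 0 := by
    rw [sum_orth e S T (fun i hi j hj => horth i (hmemS i hi) j (hmemT j hj))]
    rw [Finset.disjoint_iff_inter_eq_empty.mp hd1]; simp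
  have hSS : ⟪∑ i ∈ S, e i, ∑ j ∈ S, e j⟫ = q := by
    rw [sum_orth e S S (fun i hi j hj => horth i (hmemS i hi) j (hmemS j hj))]
    rw [hS, Finset.inter_self, Nat.card_Icc]
    have : r + m + 1 - r = m + 1 := by omega
    rw [this, hq]; push_cast; ring
  have hTT : ⟪∑ i ∈ T, e i, ∑ j ∈ T, e j⟫ = w := by
    rw [sum_orth e T T (fun i hi j hj => horth i (hmemT i hi) j (hmemT j hj))]
    rw [hT, Finset.inter_self, Nat.card_Icc]
    have : s + p + 1 - s = p + 1 := by omega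
    rw [this, hw]; push_cast; ring
  have hTt : ⟪∑ i ∈ T, e i, e t⟫ = 0 := by
    rw [sum_inner]
    refine Finset.sum_eq_zero fun i hi => ?_
    rw [horth i (hmemT i hi) t hmemt, if_neg (fun h : i = t => ht2 (h ▸ hi))]
  have htt : ⟪e t, e t⟫ = (1:ℝ) := by
    rw [horth t hmemt t hmemt]; simp
  have haa : ⟪a, a⟫ = q⁻¹ := by
    rw [ha, real_inner_smul_left, real_inner_smul_right, hSS]
    field_simp [ne_of_gt hq0]
  have hbb : ⟪b, b⟫ = w⁻¹ := by
    rw [hb, real_inner_smul_left, real_inner_smul_right, hTT]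
    field_simp [ne_of_gt hw0]
  have hab : ⟪a, b⟫ = 0 := by
    rw [ha, hb, real_inner_smul_left, real_inner_smul_right, hST]; ring
  have hbc : ⟪b, c⟫ = 0 := by
    rw [hb, hc, real_inner_smul_left, hTt]; ring
  have hcc : ⟪c, c⟫ = 1 := by rw [hc]; exact htt
  have hcb : ⟪c, b⟫ = 0 := by rw [real_inner_comm]; exact hbc
  have hba : ⟪b, a⟫ = 0 := by rw [real_inner_comm]; exact hab
  have hε2 : ε ^ 2 = 1 := by rcases hε with h | h <;> rw [h] <;> ring
  have hnα : ‖α'‖ ^ 2 = w⁻¹ + 1 := by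
    rw [← real_inner_self_eq_norm_sq, hα']
    simp only [inner_add_add_self, real_inner_smul_left, real_inner_smul_right,
      hbb, hbc, hcb, hcc]
    nlinarith [hε2]
  have hnβ : ‖β'‖ ^ 2 = q⁻¹ + w⁻¹ := by
    rw [← real_inner_self_eq_norm_sq, hβ']
    simp only [inner_sub_sub_self, haa, hab, hba, hbb]
    ring
  -- Step 1: C/R must be 4, giving w = q
  have hx : (0:ℝ) < w / q := div_pos hw0 hq0
  have hgt1 : (1:ℝ) < (1 + w / q) ^ 2 := by
    have h1 : (1 + w / q) ^ 2 = 1 + (2 * (w / q) + (w / q) ^ 2) := by ring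
    have h2 : (0:ℝ) < 2 * (w / q) + (w / q) ^ 2 :=
      add_pos (by linarith) (pow_pos hx 2)
    rw [h1]; linarith
  have hqw : q = w := by
    simp only [Set.mem_insert_iff, Set.mem_singleton_iff] at hcrys
    rcases hcrys with h4 | h1 | h9
    · have heq : (1 + w / q) ^ 2 = 4 := by rw [← hquot, h4]
      have hfac : (w / q - 1) * (w / q + 3) = 0 := by linear_combination heq
      rcases mul_eq_zero.mp hfac with h | h
      · have : w / q = 1 := by linarith
        have := (div_eq_one_iff_eq (ne_of_gt hq0)).mp this
        linarith
      · linarith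
    · exfalso; rw [hquot] at h1; linarith
    · exfalso; rw [hquot] at h9; linarith
  -- Step 2: R = 1 from C*R = 4 and C/R = 4
  have hwi : (0:ℝ) < w⁻¹ := inv_pos.mpr hw0
  have hRval : R = (w⁻¹ + 1) / (w⁻¹ + w⁻¹) := by rw [hR, hnα, hnβ, hqw]
  have hR0 : 0 < R := by rw [hRval]; exact div_pos (by linarith) (by linarith)
  have h4 : C / R = 4 := by
    rw [hquot, hqw, div_self (ne_of_gt hw0)]; norm_num
  have hCR4 : C = 4 * R := (div_eq_iff (ne_of_gt hR0)).mp h4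
  have h7 : (R - 1) * (R + 1) = 0 := by
    linear_combination (1/4) * hCR - (R/4) * hCR4
  have hR1 : R = 1 := by
    rcases mul_eq_zero.mp h7 with h | h
    · linarith
    · linarith
  -- Step 3: conclude w = 1 hence p = 0, m = 0
  have hw1 : w = 1 := by
    rw [hRval] at hR1
    have h2 : w⁻¹ + 1 = w⁻¹ + w⁻¹ :=
      (div_eq_one_iff_eq (ne_of_gt (by linarith : (0:ℝ) < w⁻¹ + w⁻¹))).mp hR1
    have h3 : w⁻¹ = 1 := by linarith
    exact inv_eq_one.mp h3
  have hp0 : p = 0 := by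
    have : (p : ℝ) = 0 := by rw [hw] at hw1; linarith
    exact_mod_cast this
  have hm0 : m = 0 := by
    have : (m : ℝ) = 0 := by
      have h := hqw
      rw [hq, hw] at h
      have : ((p:ℝ)) = 0 := by exact_mod_cast congrArg Nat.cast hp0
      linarith
    exact_mod_cast this
  exact ⟨hm0, hp0⟩
end

section
/- Let Σ = F_4 in ℝ^4 with simple roots α_1 = e_2 − e_3, α_2 = e_3 − e_4, α_3 = e_4, α_4 = ½(e_1 − e_2 − e_3 − e_4), and let Θ = {α_1, α_2}. Then the nonzero orthogonal projections of the roots of F_4 onto (span Θ)^⊥ contain a root system of type G_2, whose base consists of the projections of α_3 and α_4. -/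
/-!
Projecting onto `(span Θ)ᗮ = {x | x₁ = x₂ = x₃}` averages the last three coordinates, so
`a = p α₃ = (0, 1/3, 1/3, 1/3)` and `b = p α₄ = α₄`, with `⟪a, a⟫ = 1/3`, `⟪a, b⟫ = -1/2` and
`⟪b, b⟫ = 1`: this is the Gram matrix of a base of `G₂`. The twelve integer combinations
`±a, ±b, ±(a + b), ±(2a + b), ±(3a + b), ±(3a + 2b)` are then closed under the reflections,
a finite check on their coordinates that only involves the Gram matrix, and each of them is the
projection of an explicit root of `F₄`.
-/

open scoped RealInnerProductSpace

namespace G2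

def roots : Finset (ℤ × ℤ) :=
  {(1, 0), (0, 1), (1, 1), (2, 1), (3, 1), (3, 2),
    (-1, 0), (0, -1), (-1, -1), (-2, -1), (-3, -1), (-3, -2)}

def form (p q : ℤ × ℤ) : ℤ := 2 * p.1 * q.1 - 3 * (p.1 * q.2 + p.2 * q.1) + 6 * p.2 * q.2

def cartan (p q : ℤ × ℤ) : ℤ := 2 * form q p / form p p

lemma form_self_ne_zero : ∀ p ∈ roots, form p p ≠ 0 := by decide

lemma cartan_mul_form_self : ∀ p ∈ roots, ∀ q ∈ roots, cartan p q * form p p = 2 * form q p := by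
  decide

lemma reflect_mem_roots :
    ∀ p ∈ roots, ∀ q ∈ roots, (q.1 - cartan p q * p.1, q.2 - cartan p q * p.2) ∈ roots := by
  decide

lemma roots_sign : ∀ p ∈ roots, (0 ≤ p.1 ∧ 0 ≤ p.2) ∨ (p.1 ≤ 0 ∧ p.2 ≤ 0) := by decide

lemma card_roots : roots.card = 12 := by decide

variable {E : Type*} [NormedAddCommGroup E] [InnerProductSpace ℝ E]

noncomputable def ofCoords (a b : E) (q : ℤ × ℤ) : E := (q.1 : ℝ) • a + (q.2 : ℝ) • b

section

variable {a b : E} (hab : 2 * ⟪a, b⟫ = -3 * ⟪a, a⟫) (hbb : ⟪b, b⟫ = 3 * ⟪a, a⟫)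
include hab hbb

lemma inner_ofCoords (p q : ℤ × ℤ) : ⟪ofCoords a b p, ofCoords a b q⟫ = ⟪a, a⟫ * form p q / 2 := by
  have hba : ⟪b, a⟫ = ⟪a, b⟫ := real_inner_comm _ _
  simp only [ofCoords, inner_add_left, inner_add_right, real_inner_smul_left, real_inner_smul_right,
    hba, hbb, form]
  push_cast
  linear_combination (↑q.1 * ↑p.2 + ↑p.1 * ↑q.2 : ℝ) / 2 * hab

lemma ofCoords_injective (ha : a ≠ 0) : Function.Injective (ofCoords a b) := by
  intro p q h
  have haa : ⟪a, a⟫ ≠ 0 := inner_self_ne_zero.mpr ha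
  have h1 := congrArg (⟪ofCoords a b (1, 0), ·⟫) h
  have h2 := congrArg (⟪ofCoords a b (0, 1), ·⟫) h
  simp only [inner_ofCoords hab hbb, form] at h1 h2
  field_simp at h1 h2
  norm_cast at h1 h2
  ext <;> omega

lemma ofCoords_ne_zero (ha : a ≠ 0) {p : ℤ × ℤ} (hp : p ∈ roots) : ofCoords a b p ≠ 0 := by
  have haa : ⟪a, a⟫ ≠ 0 := inner_self_ne_zero.mpr ha
  rw [← inner_self_ne_zero (𝕜 := ℝ), inner_ofCoords hab hbb]
  have := form_self_ne_zero p hp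
  positivity

lemma reflect_ofCoords (ha : a ≠ 0) {p q : ℤ × ℤ} (hp : p ∈ roots) (hq : q ∈ roots) :
    ofCoords a b q -
        (2 * ⟪ofCoords a b q, ofCoords a b p⟫ / ⟪ofCoords a b p, ofCoords a b p⟫) • ofCoords a b p =
      ofCoords a b (q.1 - cartan p q * p.1, q.2 - cartan p q * p.2) := by
  have haa : ⟪a, a⟫ ≠ 0 := inner_self_ne_zero.mpr ha
  have hpp : (form p p : ℝ) ≠ 0 := by exact_mod_cast form_self_ne_zero p hp
  have hcartan :
      2 * ⟪ofCoords a b q, ofCoords a b p⟫ / ⟪ofCoords a b p, ofCoords a b p⟫ = cartan p q := by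
    rw [inner_ofCoords hab hbb, inner_ofCoords hab hbb, div_eq_iff (by positivity)]
    have : (cartan p q * form p p : ℝ) = 2 * form q p := by
      exact_mod_cast cartan_mul_form_self p hp q hq
    linear_combination -⟪a, a⟫ / 2 * this
  rw [hcartan, ofCoords, ofCoords, ofCoords]
  push_cast
  module

end

noncomputable def rootSet (a b : E) : Set E := ofCoords a b '' roots

lemma left_mem_rootSet (a b : E) : a ∈ rootSet a b := ⟨(1, 0), by decide, by simp [ofCoords]⟩

lemma right_mem_rootSet (a b : E) : b ∈ rootSet a b := ⟨(0, 1), by decide, by simp [ofCoords]⟩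

lemma exists_int_coeffs_of_mem_rootSet {a b x : E} (hx : x ∈ rootSet a b) :
    ∃ c d : ℤ, ((0 ≤ c ∧ 0 ≤ d) ∨ (c ≤ 0 ∧ d ≤ 0)) ∧ x = (c : ℝ) • a + (d : ℝ) • b := by
  obtain ⟨q, hq, rfl⟩ := hx
  exact ⟨q.1, q.2, roots_sign q hq, rfl⟩

section

variable {a b : E} (hab : 2 * ⟪a, b⟫ = -3 * ⟪a, a⟫) (hbb : ⟪b, b⟫ = 3 * ⟪a, a⟫) (ha : a ≠ 0)
include hab hbb ha

lemma zero_notMem_rootSet : (0 : E) ∉ rootSet a b := by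
  rintro ⟨q, hq, h⟩
  exact ofCoords_ne_zero hab hbb ha hq h

lemma ncard_rootSet : (rootSet a b).ncard = 12 := by
  rw [rootSet, Set.ncard_image_of_injective _ (ofCoords_injective hab hbb ha), Set.ncard_coe_finset,
    card_roots]

lemma reflection_mem_rootSet {x y : E} (hx : x ∈ rootSet a b) (hy : y ∈ rootSet a b) :
    y - (2 * ⟪y, x⟫ / ⟪x, x⟫) • x ∈ rootSet a b := by
  obtain ⟨p, hp, rfl⟩ := hx
  obtain ⟨q, hq, rfl⟩ := hy
  rw [reflect_ofCoords hab hbb ha hp hq]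
  exact ⟨_, reflect_mem_roots p hp q hq, rfl⟩

end

end G2

open EuclideanSpace

abbrev thetaSpan : Submodule ℝ (EuclideanSpace ℝ (Fin 4)) :=
  Submodule.span ℝ {single 1 1 - single 2 1, single 2 1 - single 3 1}

noncomputable def projThetaPerp (x : EuclideanSpace ℝ (Fin 4)) : EuclideanSpace ℝ (Fin 4) :=
  let m := (x 1 + x 2 + x 3) / 3
  !₂[x 0, m, m, m]

lemma orthogonalProjectionOnto_thetaSpan_orthogonal (x : EuclideanSpace ℝ (Fin 4)) :
    (thetaSpanᗮ.orthogonalProjectionOnto x : EuclideanSpace ℝ (Fin 4)) = projThetaPerp x := by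
  refine Submodule.eq_starProjection_of_mem_orthogonal' (z := x - projThetaPerp x) ?_
    (thetaSpan.le_orthogonal_orthogonal ?_) (add_sub_cancel _ _).symm
  · rw [Submodule.mem_orthogonal]
    intro u hu
    obtain ⟨s, t, rfl⟩ := Submodule.mem_span_pair.mp hu
    simp [projThetaPerp, inner_add_left, inner_sub_left, real_inner_smul_left, inner_single_left]
  · rw [Submodule.mem_span_pair]
    refine ⟨x 1 - (x 1 + x 2 + x 3) / 3, x 1 + x 2 - 2 * ((x 1 + x 2 + x 3) / 3), ?_⟩
    ext i
    fin_cases i <;> simp [projThetaPerp] <;> ring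

def f4Roots : Set (EuclideanSpace ℝ (Fin 4)) :=
  {x | (∃ i, x = single i 1 ∨ x = -single i 1) ∨
    (∃ i j, i < j ∧ (x = single i 1 + single j 1 ∨ x = single i 1 - single j 1 ∨
      x = -single i 1 + single j 1 ∨ x = -single i 1 - single j 1)) ∨
    (∃ ε : Fin 4 → ℤ, (∀ i, ε i = 1 ∨ ε i = -1) ∧
      x = (1 / 2 : ℝ) • ∑ i, (ε i : ℝ) • single i (1 : ℝ))}

lemma half_sum_mem_f4Roots (ε : Fin 4 → ℤ) (hε : ∀ i, ε i = 1 ∨ ε i = -1) :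
    (1 / 2 : ℝ) • ∑ i, (ε i : ℝ) • single i (1 : ℝ) ∈ f4Roots :=
  .inr (.inr ⟨ε, hε, rfl⟩)

lemma rootSet_subset_image_f4Roots :
    G2.rootSet !₂[0, 1 / 3, 1 / 3, 1 / 3] !₂[1 / 2, -1 / 2, -1 / 2, -1 / 2] ⊆
      projThetaPerp '' f4Roots := by
  rintro _ ⟨q, hq, rfl⟩
  rw [Finset.mem_coe] at hq
  -- `projThetaPerp r = c • a + d • b` iff `r 0 = d / 2` and `r 1 + r 2 + r 3 = c - 3 * d / 2`.
  fin_cases hq <;> [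
    refine ⟨single 3 1, .inl ⟨3, .inl rfl⟩, ?_⟩;
    refine ⟨_, half_sum_mem_f4Roots ![1, -1, -1, -1] (by decide), ?_⟩;
    refine ⟨_, half_sum_mem_f4Roots ![1, -1, -1, 1] (by decide), ?_⟩;
    refine ⟨_, half_sum_mem_f4Roots ![1, 1, 1, -1] (by decide), ?_⟩;
    refine ⟨_, half_sum_mem_f4Roots ![1, 1, 1, 1] (by decide), ?_⟩;
    refine ⟨single 0 1, .inl ⟨0, .inl rfl⟩, ?_⟩;
    refine ⟨-single 3 1, .inl ⟨3, .inr rfl⟩, ?_⟩;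
    refine ⟨_, half_sum_mem_f4Roots ![-1, 1, 1, 1] (by decide), ?_⟩;
    refine ⟨_, half_sum_mem_f4Roots ![-1, 1, 1, -1] (by decide), ?_⟩;
    refine ⟨_, half_sum_mem_f4Roots ![-1, -1, -1, 1] (by decide), ?_⟩;
    refine ⟨_, half_sum_mem_f4Roots ![-1, -1, -1, -1] (by decide), ?_⟩;
    refine ⟨-single 0 1, .inl ⟨0, .inr rfl⟩, ?_⟩] <;>
  · ext i
    fin_cases i <;> simp [projThetaPerp, G2.ofCoords, Fin.sum_univ_four] <;> norm_num

/-- For F₄ in ℝ⁴ with Θ = {α₁, α₂}, the nonzero orthogonal projections of the roots of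
F₄ onto (span Θ)^⊥ contain a root system of type G₂ whose base consists of the
projections a, b of α₃ and α₄. -/
theorem stmt15 :
    ∀ (e : Fin 4 → EuclideanSpace ℝ (Fin 4)), (∀ i, e i = EuclideanSpace.single i 1) →
    ∀ (F4 : Set (EuclideanSpace ℝ (Fin 4))),
    F4 = {x | (∃ i, x = e i ∨ x = -e i) ∨
      (∃ i j, i < j ∧ (x = e i + e j ∨ x = e i - e j ∨ x = -e i + e j ∨ x = -e i - e j)) ∨
      (∃ ε : Fin 4 → ℤ, (∀ i, ε i = 1 ∨ ε i = -1) ∧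
        x = (1 / 2 : ℝ) • ∑ i, (ε i : ℝ) • e i)} →
    ∀ (p : EuclideanSpace ℝ (Fin 4) → EuclideanSpace ℝ (Fin 4)),
    (∀ x, p x = (Submodule.orthogonalProjectionOnto
      ((Submodule.span ℝ {e 1 - e 2, e 2 - e 3})ᗮ) x : EuclideanSpace ℝ (Fin 4))) →
    ∀ a b, a = p (e 3) → b = p ((1 / 2 : ℝ) • (e 0 - e 1 - e 2 - e 3)) →
    ∃ G : Set (EuclideanSpace ℝ (Fin 4)), G ⊆ p '' F4 ∧ (0 : EuclideanSpace ℝ (Fin 4)) ∉ G ∧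
      G.ncard = 12 ∧ a ∈ G ∧ b ∈ G ∧
      ‖b‖ ^ 2 = 3 * ‖a‖ ^ 2 ∧ 2 * ⟪a, b⟫ / ⟪a, a⟫ = -3 ∧ 2 * ⟪a, b⟫ / ⟪b, b⟫ = -1 ∧
      (∀ x ∈ G, ∀ y ∈ G, y - (2 * ⟪y, x⟫ / ⟪x, x⟫) • x ∈ G) ∧
      (∀ x ∈ G, ∃ c d : ℤ, ((0 ≤ c ∧ 0 ≤ d) ∨ (c ≤ 0 ∧ d ≤ 0)) ∧
        x = (c : ℝ) • a + (d : ℝ) • b) := by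
  intro e he F4 hF4 p hp a b ha hb
  obtain rfl : e = fun i => single i 1 := funext he
  obtain rfl : p = projThetaPerp :=
    funext fun x => (hp x).trans (orthogonalProjectionOnto_thetaSpan_orthogonal x)
  subst hF4
  have ha₀ : a = !₂[0, 1 / 3, 1 / 3, 1 / 3] := by
    rw [ha]; ext i; fin_cases i <;> simp [projThetaPerp]
  have hb₀ : b = !₂[1 / 2, -1 / 2, -1 / 2, -1 / 2] := by
    rw [hb]; ext i; fin_cases i <;> simp [projThetaPerp] <;> norm_num
  have haa : ⟪a, a⟫ = 1 / 3 := by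
    rw [ha₀, PiLp.inner_apply]; simp [Fin.sum_univ_four]; norm_num
  have hab : 2 * ⟪a, b⟫ = -3 * ⟪a, a⟫ := by
    rw [haa, ha₀, hb₀, PiLp.inner_apply]; simp [Fin.sum_univ_four]; norm_num
  have hbb : ⟪b, b⟫ = 3 * ⟪a, a⟫ := by
    rw [haa, hb₀, PiLp.inner_apply]; simp [Fin.sum_univ_four]; norm_num
  have ha_ne : a ≠ 0 := by rintro rfl; simp at haa
  refine ⟨G2.rootSet a b, ha₀ ▸ hb₀ ▸ rootSet_subset_image_f4Roots,
    G2.zero_notMem_rootSet hab hbb ha_ne, G2.ncard_rootSet hab hbb ha_ne,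
    G2.left_mem_rootSet a b, G2.right_mem_rootSet a b, ?_, ?_, ?_,
    fun _ hx _ hy => G2.reflection_mem_rootSet hab hbb ha_ne hx hy,
    fun _ hx => G2.exists_int_coeffs_of_mem_rootSet hx⟩
  · rw [← real_inner_self_eq_norm_sq, ← real_inner_self_eq_norm_sq, hbb]
  · rw [hab, haa]; norm_num
  · rw [hab, hbb, haa]; norm_num
end
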